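/- arXiv:1211.0100 — 2 statements merged into one kernel-verified Lean document; each statement's English description precedes it below -/
import Mathlib

section
/- Let c : ℝ → ℝ be a function. Let u, v : ℝ × ℝ → ℝ be continuously differentiable and satisfy the potential system v_x(x,t) = u_t(x,t) and v_t(x,t) = c(u(x,t))²·u_x(x,t) for all (x,t). Suppose τ : ℝ × ℝ → ℝ is continuously differentiable and satisfies u(X, τ(X,T)) = T for all (X,T). Define U(X,T) = τ(X,T) + v(X, τ(X,T)) and V(X,T) = v(X, τ(X,T)). Then for all (X,T): V_X·U_T − V_T·U_X = 1 and V_T + c(T)²·U_X − c(T)²·V_X = 0, where subscripts denote partial derivatives with respect to X and T. -/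
/-!
Write `p = (X, τ(X,T))` and let subscripts denote partial derivatives. Differentiating
`u(X, τ(X,T)) = T` gives `u_x + τ_X u_t = 0` and `τ_T u_t = 1` at `p`, while the chain rule gives
`V_X = v_x + τ_X v_t`, `V_T = τ_T v_t`, `U = τ + V`. Hence
`V_X U_T − V_T U_X = τ_T V_X − τ_X V_T = τ_T v_x = τ_T u_t = 1` and
`V_T + c²(U_X − V_X) = τ_T c² u_x + c² τ_X = c² (τ_T u_x + τ_X) = 0`.
-/

section PartialDerivatives

variable {𝕜 F : Type*} [NontriviallyNormedField 𝕜] [NormedAddCommGroup F] [NormedSpace 𝕜 F]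

noncomputable def partialFst (f : 𝕜 × 𝕜 → F) (p : 𝕜 × 𝕜) : F := fderiv 𝕜 f p (1, 0)

noncomputable def partialSnd (f : 𝕜 × 𝕜 → F) (p : 𝕜 × 𝕜) : F := fderiv 𝕜 f p (0, 1)

lemma apply_prod_eq_smul_add_smul (D : 𝕜 × 𝕜 →L[𝕜] F) (a b : 𝕜) :
    D (a, b) = a • D (1, 0) + b • D (0, 1) := by
  rw [← map_smul, ← map_smul, ← map_add]
  simp

variable {f : 𝕜 × 𝕜 → F}

lemma DifferentiableAt.hasDerivAt_comp_prodMk {a b : 𝕜 → 𝕜} {a' b' x : 𝕜}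
    (hf : DifferentiableAt 𝕜 f (a x, b x)) (ha : HasDerivAt a a' x) (hb : HasDerivAt b b' x) :
    HasDerivAt (fun s => f (a s, b s))
      (a' • partialFst f (a x, b x) + b' • partialSnd f (a x, b x)) x := by
  have h := hf.hasFDerivAt.comp_hasDerivAt x (ha.prodMk hb)
  rwa [apply_prod_eq_smul_add_smul] at h

lemma DifferentiableAt.hasDerivAt_partialFst {x t : 𝕜} (hf : DifferentiableAt 𝕜 f (x, t)) :
    HasDerivAt (fun y => f (y, t)) (partialFst f (x, t)) x := by
  simpa using hf.hasDerivAt_comp_prodMk (hasDerivAt_id' x) (hasDerivAt_const x t)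

lemma DifferentiableAt.hasDerivAt_partialSnd {x t : 𝕜} (hf : DifferentiableAt 𝕜 f (x, t)) :
    HasDerivAt (fun s => f (x, s)) (partialSnd f (x, t)) t := by
  simpa using hf.hasDerivAt_comp_prodMk (hasDerivAt_const t x) (hasDerivAt_id' t)

end PartialDerivatives

section GraphInverse

variable {𝕜 : Type*} [NontriviallyNormedField 𝕜] {u τ : 𝕜 × 𝕜 → 𝕜}

lemma partialFst_add_mul_partialSnd_of_comp_eq_snd (hτinv : ∀ X T, u (X, τ (X, T)) = T)
    {X T : 𝕜} (hu : DifferentiableAt 𝕜 u (X, τ (X, T))) (hτ : DifferentiableAt 𝕜 τ (X, T)) :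
    partialFst u (X, τ (X, T)) + partialFst τ (X, T) * partialSnd u (X, τ (X, T)) = 0 := by
  have h := hu.hasDerivAt_comp_prodMk (hasDerivAt_id' X) hτ.hasDerivAt_partialFst
  simp only [hτinv, smul_eq_mul, one_mul] at h
  exact h.unique (hasDerivAt_const X T)

lemma partialSnd_mul_partialSnd_of_comp_eq_snd (hτinv : ∀ X T, u (X, τ (X, T)) = T)
    {X T : 𝕜} (hu : DifferentiableAt 𝕜 u (X, τ (X, T))) (hτ : DifferentiableAt 𝕜 τ (X, T)) :
    partialSnd τ (X, T) * partialSnd u (X, τ (X, T)) = 1 := by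
  have h := hu.hasDerivAt_comp_prodMk (hasDerivAt_const T X) hτ.hasDerivAt_partialSnd
  simp only [hτinv, smul_eq_mul, zero_mul, zero_add] at h
  exact h.unique (hasDerivAt_id' T)

end GraphInverse

/-- The point transformation X = x, T = u, U = t + v, V = v maps the potential
system v_x = u_t, v_t = c²(u)u_x of the nonlinear wave equation into the system
V_X U_T − V_T U_X = 1, V_T + c²(T)U_X − c²(T)V_X = 0. -/
theorem stmt_9 (c : ℝ → ℝ) (u v τ : ℝ × ℝ → ℝ)
    (hu : ContDiff ℝ 1 u) (hv : ContDiff ℝ 1 v) (hτ : ContDiff ℝ 1 τ)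
    (hpot1 : ∀ x t : ℝ, deriv (fun y => v (y, t)) x = deriv (fun s => u (x, s)) t)
    (hpot2 : ∀ x t : ℝ, deriv (fun s => v (x, s)) t
      = (c (u (x, t))) ^ 2 * deriv (fun y => u (y, t)) x)
    (hτinv : ∀ X T : ℝ, u (X, τ (X, T)) = T) :
    let U : ℝ × ℝ → ℝ := fun p => τ p + v (p.1, τ p)
    let V : ℝ × ℝ → ℝ := fun p => v (p.1, τ p)
    ∀ X T : ℝ,
      deriv (fun Y => V (Y, T)) X * deriv (fun S => U (X, S)) T
        - deriv (fun S => V (X, S)) T * deriv (fun Y => U (Y, T)) X = 1 ∧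
      deriv (fun S => V (X, S)) T + (c T) ^ 2 * deriv (fun Y => U (Y, T)) X
        - (c T) ^ 2 * deriv (fun Y => V (Y, T)) X = 0 := by
  intro U V X T
  have hu' := hu.differentiable one_ne_zero
  have hv' := hv.differentiable one_ne_zero
  have hτ' := hτ.differentiable one_ne_zero
  have hcX := partialFst_add_mul_partialSnd_of_comp_eq_snd hτinv (hu' _) (hτ' (X, T))
  have hcT := partialSnd_mul_partialSnd_of_comp_eq_snd hτinv (hu' _) (hτ' (X, T))
  have hVX : HasDerivAt (fun Y => V (Y, T)) _ X :=
    (hv' _).hasDerivAt_comp_prodMk (hasDerivAt_id' X) (hτ' (X, T)).hasDerivAt_partialFst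
  have hVT : HasDerivAt (fun S => V (X, S)) _ T :=
    (hv' _).hasDerivAt_comp_prodMk (hasDerivAt_const T X) (hτ' (X, T)).hasDerivAt_partialSnd
  have hUX : HasDerivAt (fun Y => U (Y, T)) _ X := (hτ' (X, T)).hasDerivAt_partialFst.add hVX
  have hUT : HasDerivAt (fun S => U (X, S)) _ T := (hτ' (X, T)).hasDerivAt_partialSnd.add hVT
  have hp1 := hpot1 X (τ (X, T))
  have hp2 := hpot2 X (τ (X, T))
  rw [(hv' _).hasDerivAt_partialFst.deriv, (hu' _).hasDerivAt_partialSnd.deriv] at hp1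
  rw [(hv' _).hasDerivAt_partialSnd.deriv, (hu' _).hasDerivAt_partialFst.deriv, hτinv] at hp2
  simp only [smul_eq_mul, one_mul, zero_mul, zero_add] at hVX hVT hUX hUT
  rw [hVX.deriv, hVT.deriv, hUX.deriv, hUT.deriv]
  exact ⟨by linear_combination partialSnd τ (X, T) * hp1 + hcT,
    by linear_combination partialSnd τ (X, T) * hp2
      + c T ^ 2 * (partialSnd τ (X, T) * hcX - partialFst τ (X, T) * hcT)⟩
end

section
/- Let ε ∈ ℝ and let u : ℝ × ℝ → ℝ be a twice continuously differentiable function with u(x,t) > 0 for all (x,t) satisfying the nonlinear wave equation u_tt(x,t) = ∂/∂x [ u(x,t)^{−4/3}·u_x(x,t) ] for all (x,t). Define ũ(x,t) = (1 + ε·x)⁻³·u(x/(1 + ε·x), t) for (x,t) with 1 + ε·x > 0. Then at every point (x,t) with 1 + ε·x > 0, ũ(x,t) > 0 and ũ satisfies ũ_tt(x,t) = ∂/∂x [ ũ(x,t)^{−4/3}·ũ_x(x,t) ]. -/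
/-!
With a = 1 + εx and φ(x) = x/a, so that φ' = a⁻², the new profile is w = a⁻³ · u ∘ φ and its flux
w^{-4/3} w_x equals a⁻¹ (u^{-4/3} u_x) ∘ φ − 3ε (u ∘ φ)^{-1/3}. Since (u^{-1/3})_x = −⅓ u^{-4/3} u_x,
differentiating this in x makes the two terms proportional to ε cancel, leaving
(w^{-4/3} w_x)_x = a⁻³ (u^{-4/3} u_x)_x ∘ φ. The time side is simply w_tt = a⁻³ u_tt ∘ φ.
-/

open Filter Topology

noncomputable def flux (f : ℝ → ℝ) (y : ℝ) : ℝ := f y ^ (-(4 : ℝ) / 3) * deriv f y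

noncomputable def transformX7 (ε : ℝ) (f : ℝ → ℝ) (y : ℝ) : ℝ :=
  ((1 + ε * y) ^ 3)⁻¹ * f (y / (1 + ε * y))

lemma hasDerivAt_one_add_mul (ε y : ℝ) : HasDerivAt (fun y => 1 + ε * y) ε y := by
  simpa using ((hasDerivAt_id' y).const_mul ε).const_add 1

lemma hasDerivAt_div_one_add_mul {ε y : ℝ} (hy : 1 + ε * y ≠ 0) :
    HasDerivAt (fun y => y / (1 + ε * y)) ((1 + ε * y) ^ 2)⁻¹ y := by
  refine ((hasDerivAt_id' y).div (hasDerivAt_one_add_mul ε y) hy).congr_deriv ?_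
  field_simp
  ring

lemma hasDerivAt_transformX7 {ε y f' : ℝ} {f : ℝ → ℝ} (hy : 1 + ε * y ≠ 0)
    (hf : HasDerivAt f f' (y / (1 + ε * y))) :
    HasDerivAt (transformX7 ε f)
      (-3 * ε * ((1 + ε * y) ^ 4)⁻¹ * f (y / (1 + ε * y)) + ((1 + ε * y) ^ 5)⁻¹ * f') y := by
  refine ((((hasDerivAt_one_add_mul ε y).pow 3).inv (pow_ne_zero 3 hy)).mul
    (hf.comp y (hasDerivAt_div_one_add_mul hy))).congr_deriv ?_
  simp only [Function.comp_apply, Pi.inv_apply, Pi.pow_apply]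
  field_simp
  ring

lemma flux_transformX7 {ε y : ℝ} {f : ℝ → ℝ} (hy : 0 < 1 + ε * y)
    (hpos : 0 < f (y / (1 + ε * y))) (hf : DifferentiableAt ℝ f (y / (1 + ε * y))) :
    flux (transformX7 ε f) y
      = (1 + ε * y)⁻¹ * flux f (y / (1 + ε * y))
        - 3 * ε * f (y / (1 + ε * y)) ^ (-(1 : ℝ) / 3) := by
  have hpow : transformX7 ε f y ^ (-(4 : ℝ) / 3)
      = (1 + ε * y) ^ 4 * f (y / (1 + ε * y)) ^ (-(4 : ℝ) / 3) := by
    rw [transformX7, Real.mul_rpow (by positivity) hpos.le, ← Real.rpow_natCast _ 3,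
      ← Real.rpow_neg hy.le, ← Real.rpow_mul hy.le, ← Real.rpow_natCast _ 4]
    norm_num
  have hroot : f (y / (1 + ε * y)) ^ (-(1 : ℝ) / 3)
      = f (y / (1 + ε * y)) ^ (-(4 : ℝ) / 3) * f (y / (1 + ε * y)) := by
    rw [← Real.rpow_add_one hpos.ne']
    norm_num
  rw [flux, flux, (hasDerivAt_transformX7 hy.ne' hf.hasDerivAt).deriv, hpow, hroot]
  field_simp
  ring

lemma hasDerivAt_rpow_neg_one_third {f : ℝ → ℝ} {z : ℝ} (hpos : 0 < f z)
    (hf : DifferentiableAt ℝ f z) :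
    HasDerivAt (fun z => f z ^ (-(1 : ℝ) / 3)) (-(1 / 3) * flux f z) z := by
  refine (hf.hasDerivAt.rpow_const (p := -(1 : ℝ) / 3) (Or.inl hpos.ne')).congr_deriv ?_
  rw [flux]
  norm_num
  ring

lemma deriv_flux_transformX7 {ε x : ℝ} {f : ℝ → ℝ} (hx : 0 < 1 + ε * x)
    (hpos : ∀ y, 0 < f y) (hf : Differentiable ℝ f)
    (hflux : DifferentiableAt ℝ (flux f) (x / (1 + ε * x))) :
    deriv (flux (transformX7 ε f)) x
      = ((1 + ε * x) ^ 3)⁻¹ * deriv (flux f) (x / (1 + ε * x)) := by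
  have hφ := hasDerivAt_div_one_add_mul hx.ne'
  have hnear : flux (transformX7 ε f) =ᶠ[𝓝 x] fun y =>
      (1 + ε * y)⁻¹ * flux f (y / (1 + ε * y)) - 3 * ε * f (y / (1 + ε * y)) ^ (-(1 : ℝ) / 3) := by
    filter_upwards [continuousAt_const.eventually_lt (hasDerivAt_one_add_mul ε x).continuousAt hx]
      with y hy
    exact flux_transformX7 hy (hpos _) (hf _)
  rw [hnear.deriv_eq]
  refine ((((hasDerivAt_one_add_mul ε x).inv hx.ne').mul (hflux.hasDerivAt.comp x hφ)).sub
    (((hasDerivAt_rpow_neg_one_third (hpos _) (hf _)).comp x hφ).const_mul (3 * ε))).deriv.trans ?_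
  simp only [Function.comp_apply, Pi.inv_apply]
  field_simp
  ring

lemma differentiable_flux {f : ℝ → ℝ} (hf : ContDiff ℝ 2 f) (hpos : ∀ y, 0 < f y) :
    Differentiable ℝ (flux f) :=
  ((hf.differentiable (by norm_num)).rpow_const fun y => Or.inl (hpos y).ne').mul
    hf.differentiable_deriv_two

/-- The point symmetry X₇ = x²∂/∂x − 3xu∂/∂u of the nonlinear wave equation
u_tt = (u^{−4/3}u_x)_x maps positive solutions to positive solutions on the
domain where 1 + εx > 0: ũ(x,t) = (1 + εx)⁻³u(x/(1 + εx), t) is again a positive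
solution there. -/
theorem stmt_16 (ε : ℝ) (u : ℝ × ℝ → ℝ) (hu : ContDiff ℝ 2 u)
    (hpos : ∀ x t : ℝ, 0 < u (x, t))
    (hPDE : ∀ x t : ℝ, deriv (deriv (fun s => u (x, s))) t
      = deriv (fun y => u (y, t) ^ (-(4 : ℝ) / 3) * deriv (fun z => u (z, t)) y) x) :
    let w : ℝ × ℝ → ℝ := fun p => ((1 + ε * p.1) ^ 3)⁻¹ * u (p.1 / (1 + ε * p.1), p.2)
    ∀ x t : ℝ, 0 < 1 + ε * x →
      0 < w (x, t) ∧
      deriv (deriv (fun s => w (x, s))) t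
        = deriv (fun y => w (y, t) ^ (-(4 : ℝ) / 3) * deriv (fun z => w (z, t)) y) x := by
  intro w x t hx
  have hslice : ContDiff ℝ 2 fun y => u (y, t) := hu.comp (contDiff_id.prodMk contDiff_const)
  refine ⟨mul_pos (inv_pos.2 (pow_pos hx 3)) (hpos _ _), ?_⟩
  show deriv (deriv fun s => ((1 + ε * x) ^ 3)⁻¹ * u (x / (1 + ε * x), s)) t
      = deriv (flux (transformX7 ε fun y => u (y, t))) x
  simp only [deriv_const_mul_field', hPDE]
  exact (deriv_flux_transformX7 hx (hpos · t) (hslice.differentiable (by norm_num))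
    (differentiable_flux hslice (hpos · t) _)).symm
end
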